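/- arXiv:2510.22360 — 2 statements merged into one kernel-verified Lean document; each statement's English description precedes it below -/
import Mathlib

section
/- Consider the free graded Z-module C with generators a1, a2, a3 in degree 1, b1, b2, b3 in degree 0, c1 in degree k+1, c2 in degree k, d1 in degree -k-1, d2 in degree -k, and with differential d(a1) = d(a2) = b1 + (1-n)b3, d(a3) = 0, d(c1) = (-1)^k(n-1)c2, d(d2) = (1-n)d1, and d = 0 on all other generators, where n and k are integers with k < 0 and n ≠ 1. Then the homology of C is Z² in degree 1, Z² in degree 0, Z/(n-1)Z in degree k, Z/(n-1)Z in degree -k-1, and zero otherwise. -/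
/-!
Modulo boundaries a cycle `x` is determined by the integers `x(a1)`, `x(a3)`, `x(b2)`,
`x(b3) + (n - 1) x(b1)` and by `x(c2)`, `x(d1)` modulo `n - 1`: the boundaries are spanned by
`b1 + (1 - n) b3`, `±(n - 1) c2` and `(1 - n) d1`, and `x(a1) + x(a2) = x(c1) = x(d2) = 0` on
cycles. Each of these six coordinates only involves generators of a single degree (`1, 1, 0, 0`
and `k, -k - 1`), so the degree-`j` homology is the part of `ℤ⁴ × (ℤ/(n - 1))²` living in
degree `j`.
-/

/-- Graded piece of `ι → ℤ` spanned by the standard basis vectors of a given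
degree. -/
def gradedPiece {ι : Type} [DecidableEq ι] (deg : ι → ℤ) (j : ℤ) :
    Submodule ℤ (ι → ℤ) :=
  Submodule.span ℤ {v | ∃ g, deg g = j ∧ v = Pi.single g 1}

/-- The degree-`j` homology of a homogeneous differential `D` on a graded
module, i.e. `(ker D ∩ P_j) / (im D ∩ P_j)`. -/
def homologyAt {R V : Type*} [Ring R] [AddCommGroup V] [Module R V]
    (D : V →ₗ[R] V) (P : Submodule R V) : Type _ :=
  ↥(LinearMap.ker D ⊓ P) ⧸
    Submodule.comap (LinearMap.ker D ⊓ P).subtype (LinearMap.range D ⊓ P)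

noncomputable instance {R V : Type*} [Ring R] [AddCommGroup V] [Module R V]
    (D : V →ₗ[R] V) (P : Submodule R V) : AddCommGroup (homologyAt D P) :=
  Submodule.Quotient.addCommGroup _

noncomputable instance {R V : Type*} [Ring R] [AddCommGroup V] [Module R V]
    (D : V →ₗ[R] V) (P : Submodule R V) : Module R (homologyAt D P) :=
  Submodule.Quotient.module _

/-- Generators `a1, a2, a3` (indices 0-2), `b1, b2, b3` (indices 3-5),
`c1, c2` (indices 6-7), `d1, d2` (indices 8-9); degrees
`1, 1, 1, 0, 0, 0, k+1, k, -k-1, -k`. -/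
def deg10 (k : ℤ) : Fin 10 → ℤ := ![1, 1, 1, 0, 0, 0, k + 1, k, -k - 1, -k]

/-- Differential: `d a1 = d a2 = b1 + (1-n) b3`, `d a3 = 0`,
`d c1 = (-1)^k (n-1) c2`, `d d2 = (1-n) d1`, zero on the other generators. -/
noncomputable def d10 (n k : ℤ) : (Fin 10 → ℤ) →ₗ[ℤ] (Fin 10 → ℤ) :=
  (Pi.basisFun ℤ (Fin 10)).constr ℤ
    ![Pi.single 3 1 + (1 - n) • Pi.single 5 1,
      Pi.single 3 1 + (1 - n) • Pi.single 5 1,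
      0, 0, 0, 0,
      ((((-1 : ℤˣ) ^ k : ℤˣ) : ℤ) * (n - 1)) • Pi.single 7 1,
      0, 0,
      (1 - n) • Pi.single 8 1]

lemma mem_gradedPiece_iff {ι : Type} [Fintype ι] [DecidableEq ι] {deg : ι → ℤ} {j : ℤ}
    {v : ι → ℤ} : v ∈ gradedPiece deg j ↔ ∀ i, deg i ≠ j → v i = 0 := by
  constructor
  · intro hv
    induction hv using Submodule.span_induction with
    | mem x hx =>
      obtain ⟨g, hg, rfl⟩ := hx
      exact fun i hi => Pi.single_eq_of_ne (by rintro rfl; exact hi hg) 1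
    | zero => exact fun _ _ => rfl
    | add x y _ _ hx hy => exact fun i hi => by simp [hx i hi, hy i hi]
    | smul a x _ hx => exact fun i hi => by simp [hx i hi]
  · intro h
    rw [← Finset.univ_sum_single v]
    refine Submodule.sum_mem _ fun i _ => ?_
    by_cases hd : deg i = j
    · rw [← mul_one (v i), ← smul_eq_mul, Pi.single_smul']
      exact Submodule.smul_mem _ _ (Submodule.subset_span ⟨i, hd, rfl⟩)
    · simp [h i hd]

theorem nonempty_homologyAt_equiv {R V T : Type*} [Ring R] [AddCommGroup V] [Module R V]
    [AddCommGroup T] [Module R T] {D : V →ₗ[R] V} {P : Submodule R V}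
    (φ : ↥(LinearMap.ker D ⊓ P) →ₗ[R] T) (hφ : Function.Surjective φ)
    (hker : ∀ x, φ x = 0 ↔ (x : V) ∈ LinearMap.range D) :
    Nonempty (homologyAt D P ≃ₗ[R] T) := by
  have hK : Submodule.comap (LinearMap.ker D ⊓ P).subtype (LinearMap.range D ⊓ P) =
      LinearMap.ker φ := by
    ext x
    rw [Submodule.mem_comap, Submodule.mem_inf, LinearMap.mem_ker, hker]
    exact and_iff_left x.2.2
  exact ⟨(Submodule.quotEquivOfEq _ _ hK).trans (φ.quotKerEquivOfSurjective hφ)⟩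

lemma d10_apply (n k : ℤ) (x : Fin 10 → ℤ) : d10 n k x =
    ![0, 0, 0, x 0 + x 1, 0, (1 - n) * (x 0 + x 1), 0,
      (((-1 : ℤˣ) ^ k : ℤˣ) : ℤ) * (n - 1) * x 6, (1 - n) * x 9, 0] := by
  ext i
  fin_cases i <;> simp [d10, Module.Basis.constr_apply_fintype, Fin.sum_univ_succ] <;> ring

lemma mem_ker_d10 {n k : ℤ} (hn : n ≠ 1) {x : Fin 10 → ℤ} :
    x ∈ LinearMap.ker (d10 n k) ↔ x 0 + x 1 = 0 ∧ x 6 = 0 ∧ x 9 = 0 := by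
  have hn' : n - 1 ≠ 0 := sub_ne_zero.2 hn
  have hn'' : 1 - n ≠ 0 := sub_ne_zero.2 hn.symm
  rw [LinearMap.mem_ker, d10_apply, funext_iff]
  constructor
  · intro h
    have h3 := h 3
    have h7 := h 7
    have h8 := h 8
    simp only [Fin.isValue, Matrix.cons_val, Pi.zero_apply] at h3 h7 h8
    simp only [mul_eq_zero, Units.ne_zero, hn', hn'', false_or] at h7 h8
    exact ⟨h3, h7, h8⟩
  · rintro ⟨h01, h6, h9⟩ i
    fin_cases i <;> simp [h01, h6, h9]

lemma intCast_zmod_natAbs_eq_zero_iff {m z : ℤ} : (z : ZMod m.natAbs) = 0 ↔ m ∣ z := by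
  rw [ZMod.intCast_zmod_eq_zero_iff_dvd, Int.natCast_natAbs, abs_dvd]

/-- Degrees of the free generators `[a1 - a2], [a3], [b2], [b3]` of the homology. -/
def freeDeg : Fin 4 → ℤ := ![1, 1, 0, 0]

/-- Degrees of the torsion generators `[c2], [d1]` of the homology. -/
def torsionDeg (k : ℤ) : Fin 2 → ℤ := ![k, -k - 1]

def homologyCoords (n : ℤ) : (Fin 10 → ℤ) →ₗ[ℤ] (Fin 4 → ℤ) × (Fin 2 → ZMod (n - 1).natAbs) where
  toFun x := (![x 0, x 2, x 4, x 5 + (n - 1) * x 3], ![(x 7 : ZMod _), (x 8 : ZMod _)])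
  map_add' x y := by
    ext i <;> fin_cases i <;> simp; ring
  map_smul' c x := by
    ext i <;> fin_cases i <;> simp; ring

def cycleOfCoords (m : ℕ) (w : (Fin 4 → ℤ) × (Fin 2 → ZMod m)) : Fin 10 → ℤ :=
  ![w.1 0, -w.1 0, w.1 1, 0, w.1 2, w.1 3, 0, (w.2 0).cast, (w.2 1).cast, 0]

lemma homologyCoords_cycleOfCoords (n : ℤ) (w : (Fin 4 → ℤ) × (Fin 2 → ZMod (n - 1).natAbs)) :
    homologyCoords n (cycleOfCoords _ w) = w := by
  ext i <;> fin_cases i <;> simp [homologyCoords, cycleOfCoords]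

lemma cycleOfCoords_mem_ker (n k : ℤ) {m : ℕ} (w : (Fin 4 → ℤ) × (Fin 2 → ZMod m)) :
    cycleOfCoords m w ∈ LinearMap.ker (d10 n k) := by
  rw [LinearMap.mem_ker, d10_apply]
  ext i
  fin_cases i <;> simp [cycleOfCoords]

lemma cycleOfCoords_mem_gradedPiece {k j : ℤ} {m : ℕ} {w : (Fin 4 → ℤ) × (Fin 2 → ZMod m)}
    (h₁ : ∀ i, freeDeg i ≠ j → w.1 i = 0) (h₂ : ∀ i, torsionDeg k i ≠ j → w.2 i = 0) :
    cycleOfCoords m w ∈ gradedPiece (deg10 k) j := by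
  rw [mem_gradedPiece_iff]
  intro i hi
  fin_cases i
  · exact h₁ 0 hi
  · exact neg_eq_zero.2 (h₁ 0 hi)
  · exact h₁ 1 hi
  · rfl
  · exact h₁ 2 hi
  · exact h₁ 3 hi
  · rfl
  · exact (congrArg ZMod.cast (h₂ 0 hi)).trans ZMod.cast_zero
  · exact (congrArg ZMod.cast (h₂ 1 hi)).trans ZMod.cast_zero
  · rfl

lemma homologyCoords_d10 (n k : ℤ) (w : Fin 10 → ℤ) : homologyCoords n (d10 n k w) = 0 := by
  ext i <;> fin_cases i <;>
    simp [homologyCoords, d10_apply, intCast_zmod_natAbs_eq_zero_iff, -Int.cast_mul, -Int.cast_sub]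
  · ring
  · exact (dvd_mul_left _ _).mul_right _
  · exact ⟨-w 9, by ring⟩

lemma mem_range_d10_of_homologyCoords_eq_zero {n k : ℤ} (hn : n ≠ 1) {x : Fin 10 → ℤ}
    (hx : x ∈ LinearMap.ker (d10 n k)) (h : homologyCoords n x = 0) :
    x ∈ LinearMap.range (d10 n k) := by
  obtain ⟨h01, h6, h9⟩ := mem_ker_d10 hn |>.1 hx
  have h₁ := congrArg Prod.fst h
  have h₂ := congrArg Prod.snd h
  simp only [homologyCoords, LinearMap.coe_mk, AddHom.coe_mk, Prod.fst_zero, Prod.snd_zero,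
    funext_iff, Fin.forall_fin_succ, IsEmpty.forall_iff, Matrix.cons_val_zero,
    Matrix.cons_val_succ, Pi.zero_apply, and_true, intCast_zmod_natAbs_eq_zero_iff] at h₁ h₂
  obtain ⟨h0, h2, h4, h5⟩ := h₁
  obtain ⟨⟨c, hc⟩, ⟨d, hd⟩⟩ := h₂
  have hu : (((-1 : ℤˣ) ^ k : ℤˣ) : ℤ) * ((-1 : ℤˣ) ^ k : ℤˣ) = 1 := by
    rw [← Units.val_mul, Int.units_mul_self, Units.val_one]
  refine ⟨![0, x 3, 0, 0, 0, 0, ((-1 : ℤˣ) ^ k : ℤˣ) * c, 0, 0, -d], ?_⟩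
  rw [d10_apply]
  ext i
  fin_cases i <;> simp
  · exact h0.symm
  · omega
  · exact h2.symm
  · exact h4.symm
  · linear_combination -h5
  · exact h6.symm
  · linear_combination (n - 1) * c * hu - hc
  · linear_combination -hd
  · exact h9.symm

lemma homologyCoords_supported {n k j : ℤ} {x : Fin 10 → ℤ} (hx : x ∈ gradedPiece (deg10 k) j) :
    (∀ i, freeDeg i ≠ j → (homologyCoords n x).1 i = 0) ∧
      ∀ i, torsionDeg k i ≠ j → (homologyCoords n x).2 i = 0 := by
  rw [mem_gradedPiece_iff] at hx
  constructor <;> intro i hi <;> fin_cases i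
  · exact hx 0 hi
  · exact hx 2 hi
  · exact hx 4 hi
  · simp [homologyCoords, hx 3 hi, hx 5 hi]
  · simp [homologyCoords, hx 7 hi]
  · simp [homologyCoords, hx 8 hi]

section RestrictToSubtype

variable {R M ι : Type*} [Semiring R] [AddCommMonoid M] [Module R M] {p : ι → Prop}

lemma funLeft_subtype_val_eq_zero_iff {w : ι → M} (hw : ∀ i, ¬ p i → w i = 0) :
    LinearMap.funLeft R M (Subtype.val : Subtype p → ι) w = 0 ↔ w = 0 := by
  refine ⟨fun h => funext fun i => ?_, fun h => h ▸ map_zero _⟩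
  by_cases hi : p i
  · exact congrFun h ⟨i, hi⟩
  · exact hw i hi

lemma exists_funLeft_subtype_val_eq [DecidablePred p] (t : Subtype p → M) :
    ∃ w : ι → M, (∀ i, ¬ p i → w i = 0) ∧ LinearMap.funLeft R M Subtype.val w = t :=
  ⟨fun i => if h : p i then t ⟨i, h⟩ else 0, fun _ hi => dif_neg hi,
    funext fun ⟨_, h⟩ => dif_pos h⟩

end RestrictToSubtype

theorem nonempty_homologyAt_d10_equiv {n k : ℤ} (hn : n ≠ 1) (j : ℤ) :
    Nonempty (homologyAt (d10 n k) (gradedPiece (deg10 k) j) ≃ₗ[ℤ]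
      ({i // freeDeg i = j} → ℤ) × ({i // torsionDeg k i = j} → ZMod (n - 1).natAbs)) := by
  let restrict := (LinearMap.funLeft ℤ ℤ (Subtype.val : {i // freeDeg i = j} → _)).prodMap
    (LinearMap.funLeft ℤ (ZMod (n - 1).natAbs) (Subtype.val : {i // torsionDeg k i = j} → _))
  refine nonempty_homologyAt_equiv
    (restrict ∘ₗ homologyCoords n ∘ₗ (LinearMap.ker (d10 n k) ⊓ _).subtype) ?_ ?_
  · rintro ⟨t₁, t₂⟩
    obtain ⟨w₁, hw₁, rfl⟩ := exists_funLeft_subtype_val_eq (R := ℤ) t₁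
    obtain ⟨w₂, hw₂, rfl⟩ := exists_funLeft_subtype_val_eq (R := ℤ) t₂
    refine ⟨⟨cycleOfCoords _ (w₁, w₂), cycleOfCoords_mem_ker n k _,
      cycleOfCoords_mem_gradedPiece hw₁ hw₂⟩, ?_⟩
    simp [restrict, homologyCoords_cycleOfCoords]
  · rintro ⟨x, hxK, hxP⟩
    obtain ⟨h₁, h₂⟩ := homologyCoords_supported (n := n) hxP
    simp only [LinearMap.comp_apply, Submodule.subtype_apply, restrict, LinearMap.prodMap_apply,
      Prod.mk_eq_zero, funLeft_subtype_val_eq_zero_iff h₁, funLeft_subtype_val_eq_zero_iff h₂]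
    exact ⟨fun h => mem_range_d10_of_homologyCoords_eq_zero hn hxK (Prod.ext h.1 h.2),
      fun ⟨w, hw⟩ => Prod.mk_eq_zero.1 (hw ▸ homologyCoords_d10 n k w)⟩

lemma card_freeDeg (j : ℤ) :
    Fintype.card {i // freeDeg i = j} = (if j = 1 then 2 else 0) + (if j = 0 then 2 else 0) := by
  rw [Fintype.card_subtype, Finset.card_filter, Fin.sum_univ_four]
  simp only [freeDeg, Matrix.cons_val, eq_comm (b := j)]
  split_ifs <;> omega

lemma card_torsionDeg (k j : ℤ) :
    Fintype.card {i // torsionDeg k i = j} =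
      (if j = k then 1 else 0) + (if j = -k - 1 then 1 else 0) := by
  rw [Fintype.card_subtype, Finset.card_filter, Fin.sum_univ_two]
  simp only [torsionDeg, Matrix.cons_val, eq_comm (b := j)]

theorem stmt_10_general (n k : ℤ) (hn : n ≠ 1) :
    ∀ j : ℤ,
      Nonempty (homologyAt (d10 n k) (gradedPiece (deg10 k) j) ≃ₗ[ℤ]
        ((Fin ((if j = 1 then 2 else 0) + (if j = 0 then 2 else 0)) → ℤ) ×
         (Fin ((if j = k then 1 else 0) + (if j = -k - 1 then 1 else 0)) →
           ZMod (n - 1).natAbs))) := by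
  intro j
  obtain ⟨e⟩ := nonempty_homologyAt_d10_equiv (k := k) hn j
  exact ⟨e.trans <| .prodCongr
    (.funCongrLeft ℤ ℤ (Fintype.equivFinOfCardEq (card_freeDeg j)).symm)
    (.funCongrLeft ℤ _ (Fintype.equivFinOfCardEq (card_torsionDeg k j)).symm)⟩

/-- The linearized LCH of the trefoil linked with a Legendrian unknot with
Maslov shift `k < 0`, for augmentation `ε_n` (`n ≠ 1`): homology is `ℤ²` in
degree 1, `ℤ²` in degree 0, `ℤ/(n-1)ℤ` in degrees `k` and `-k-1`, zero in all
other degrees. -/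
theorem stmt_10 (n k : ℤ) (hk : k < 0) (hn : n ≠ 1) :
    ∀ j : ℤ,
      Nonempty (homologyAt (d10 n k) (gradedPiece (deg10 k) j) ≃ₗ[ℤ]
        ((Fin ((if j = 1 then 2 else 0) + (if j = 0 then 2 else 0)) → ℤ) ×
         (Fin ((if j = k then 1 else 0) + (if j = -k - 1 then 1 else 0)) →
           ZMod (n - 1).natAbs))) :=
  stmt_10_general n k hn
end

section
/- Consider the free graded Z-module C with generators a1, a2 in degree 1 and b1, b2, b3 in degree 0, with differential d(a1) = b1 + b3, d(a2) = b1 + b2 + (1-n)b3, and d(b_i) = 0 for i = 1, 2, 3, where n is an integer. Then the homology of (C, d) is isomorphic to Z concentrated in degree 0, generated by the class of b1 (with [b3] = -[b1] and [b2] = -n[b1]). -/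
/-- Bilinearized LCH complex of the trefoil: degree 1 generators `a1, a2`
(basis of `Fin 2 → ℤ`), degree 0 generators `b1, b2, b3` (basis of
`Fin 3 → ℤ`), with `d a1 = b1 + b3` and `d a2 = b1 + b2 + (1-n) b3`.
Homology is `ℤ` concentrated in degree 0, generated by `[b1]`, with
`[b3] = -[b1]` and `[b2] = -n·[b1]`. -/
theorem stmt_11 (n : ℤ) (d : (Fin 2 → ℤ) →ₗ[ℤ] (Fin 3 → ℤ))
    (h1 : d (Pi.single 0 1) = ![1, 0, 1])
    (h2 : d (Pi.single 1 1) = ![1, 1, 1 - n]) :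
    LinearMap.ker d = ⊥ ∧
    Nonempty (((Fin 3 → ℤ) ⧸ LinearMap.range d) ≃ₗ[ℤ] ℤ) ∧
    Submodule.span ℤ
      {Submodule.Quotient.mk (p := LinearMap.range d) (Pi.single 0 1)} = ⊤ ∧
    Submodule.Quotient.mk (p := LinearMap.range d) (Pi.single 2 1) =
      -Submodule.Quotient.mk (p := LinearMap.range d) (Pi.single 0 1) ∧
    Submodule.Quotient.mk (p := LinearMap.range d) (Pi.single 1 1) =
      -n • Submodule.Quotient.mk (p := LinearMap.range d) (Pi.single 0 1) := by
  have hd : ∀ x : Fin 2 → ℤ, d x = x 0 • ![1, 0, 1] + x 1 • ![1, 1, 1 - n] := by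
    intro x
    have hx : x = x 0 • Pi.single 0 1 + x 1 • Pi.single 1 1 := by
      ext i; fin_cases i <;> simp
    conv_lhs => rw [hx]
    rw [map_add, map_smul, map_smul, h1, h2]
  set φ : (Fin 3 → ℤ) →ₗ[ℤ] ℤ :=
    LinearMap.proj 0 - n • LinearMap.proj 1 - LinearMap.proj 2 with hφ
  have hφapp : ∀ w : Fin 3 → ℤ, φ w = w 0 - n * w 1 - w 2 := by
    intro w; simp [hφ]
  have hker : LinearMap.range d = LinearMap.ker φ := by
    apply le_antisymm
    · rintro _ ⟨x, rfl⟩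
      rw [LinearMap.mem_ker, hφapp, hd]
      simp; ring
    · intro w hw
      rw [LinearMap.mem_ker, hφapp] at hw
      refine ⟨![w 0 - w 1, w 1], ?_⟩
      rw [hd]; ext i; fin_cases i <;> simp <;> linarith
  refine ⟨?_, ?_, ?_, ?_, ?_⟩
  · ext x
    simp only [LinearMap.mem_ker, Submodule.mem_bot]
    constructor
    · intro hx
      have h := (hd x).symm.trans hx
      have e1 := congrFun h 1
      have e0 := congrFun h 0
      simp at e1 e0
      ext i; fin_cases i <;> simp <;> omega
    · intro hx; rw [hx, map_zero]
  · have hsurj : Function.Surjective φ := by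
      intro z
      exact ⟨Pi.single 0 z, by rw [hφapp]; simp⟩
    exact ⟨(Submodule.quotEquivOfEq _ _ hker).trans (φ.quotKerEquivOfSurjective hsurj)⟩
  · rw [eq_top_iff]
    intro x _
    obtain ⟨w, rfl⟩ := Submodule.Quotient.mk_surjective _ x
    rw [Submodule.mem_span_singleton]
    refine ⟨φ w, ?_⟩
    rw [← Submodule.Quotient.mk_smul, eq_comm, Submodule.Quotient.eq, hker,
      LinearMap.mem_ker]
    rw [map_sub, map_smul]
    rw [hφapp (Pi.single 0 1)]
    simp
  · rw [← Submodule.Quotient.mk_neg, Submodule.Quotient.eq, hker, LinearMap.mem_ker,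
      hφapp]
    simp
  · rw [← Submodule.Quotient.mk_smul, Submodule.Quotient.eq, hker, LinearMap.mem_ker,
      hφapp]
    simp
end
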